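/- arXiv:0812.1721 — 6 statements merged into one kernel-verified Lean document; each statement's English description precedes it below -/
import Mathlib

section
/- For 0 < β < 1 and N ≥ 1, the integral ∫_{ℝ^N} e^{-|v|²/2} / (1 - β e^{-|v|²/2}) dv equals (∫_{ℝ^N} e^{-|v|²/2} dv) · ∑_{n=0}^{∞} β^n / (n+1)^{N/2}. -/
/-!
Expanding `1 / (1 - β g)` as a geometric series turns the integrand `g / (1 - β g)`, with
`g v = exp (-‖v‖² / 2)`, into `∑ βⁿ gⁿ⁺¹`. Since `0 ≤ g ≤ 1`, the `n`-th term is integrable with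
integral at most `βⁿ ∫ g`, so the series may be integrated termwise; and `gⁿ⁺¹` is again a
Gaussian, `exp (-(n + 1) ‖v‖² / 2)`, whose integral is `∫ g` scaled by `(n + 1) ^ (-N / 2)`.
-/

open MeasureTheory Real

theorem hasSum_pow_mul_pow_succ {a x : ℝ} (h0 : 0 ≤ a * x) (h1 : a * x < 1) :
    HasSum (fun n : ℕ ↦ a ^ n * x ^ (n + 1)) (x / (1 - a * x)) := by
  rw [div_eq_mul_inv]
  refine ((hasSum_geometric_of_lt_one h0 h1).mul_left x).congr_fun fun n ↦ ?_
  ring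

theorem integral_div_one_sub_mul_eq_tsum {α : Type*} [MeasurableSpace α] {μ : Measure α}
    {g : α → ℝ} (hg : Integrable g μ) (hg0 : ∀ a, 0 ≤ g a) (hg1 : ∀ a, g a ≤ 1)
    {β : ℝ} (hβ0 : 0 ≤ β) (hβ1 : β < 1) :
    ∫ a, g a / (1 - β * g a) ∂μ = ∑' n : ℕ, β ^ n * ∫ a, g a ^ (n + 1) ∂μ := by
  have hpow_le (n : ℕ) (a : α) : g a ^ (n + 1) ≤ g a :=
    pow_le_of_le_one (hg0 a) (hg1 a) n.succ_ne_zero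
  have hint (n : ℕ) : Integrable (fun a ↦ β ^ n * g a ^ (n + 1)) μ := by
    refine (hg.mono' (hg.aestronglyMeasurable.pow _) (ae_of_all _ fun a ↦ ?_)).const_mul _
    rw [Pi.pow_apply, norm_of_nonneg (pow_nonneg (hg0 a) _)]
    exact hpow_le n a
  have hnorm_le (n : ℕ) : ∫ a, ‖β ^ n * g a ^ (n + 1)‖ ∂μ ≤ β ^ n * ∫ a, g a ∂μ := by
    rw [← integral_const_mul]
    refine integral_mono (hint n).norm (hg.const_mul _) fun a ↦ ?_
    rw [norm_of_nonneg (by have := hg0 a; positivity)]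
    exact mul_le_mul_of_nonneg_left (hpow_le n a) (pow_nonneg hβ0 n)
  have hsum : Summable fun n : ℕ ↦ ∫ a, ‖β ^ n * g a ^ (n + 1)‖ ∂μ :=
    .of_nonneg_of_le (fun n ↦ integral_nonneg fun _ ↦ norm_nonneg _) hnorm_le
      ((summable_geometric_of_lt_one hβ0 hβ1).mul_right _)
  calc ∫ a, g a / (1 - β * g a) ∂μ
      = ∫ a, ∑' n : ℕ, β ^ n * g a ^ (n + 1) ∂μ := by
        refine integral_congr_ae (ae_of_all _ fun a ↦ ?_)
        have hβg : β * g a ≤ β := mul_le_of_le_one_right hβ0 (hg1 a)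
        exact (hasSum_pow_mul_pow_succ (mul_nonneg hβ0 (hg0 a)) (by linarith)).tsum_eq.symm
    _ = ∑' n : ℕ, ∫ a, β ^ n * g a ^ (n + 1) ∂μ :=
        (integral_tsum_of_summable_integral_norm hint hsum).symm
    _ = ∑' n : ℕ, β ^ n * ∫ a, g a ^ (n + 1) ∂μ := by
        simp only [integral_const_mul]

section Gaussian

variable {V : Type*} [NormedAddCommGroup V] [InnerProductSpace ℝ V] [FiniteDimensional ℝ V]
  [MeasurableSpace V] [BorelSpace V]

theorem integral_exp_neg_sq_norm_div_two :
    ∫ v : V, exp (-‖v‖ ^ 2 / 2) = (2 * π) ^ ((Module.finrank ℝ V : ℝ) / 2) := by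
  simpa [neg_div, div_eq_inv_mul, ← div_eq_mul_inv] using
    GaussianFourier.integral_rexp_neg_mul_sq_norm (V := V) (b := 1 / 2) (by norm_num)

theorem integrable_exp_neg_sq_norm_div_two :
    Integrable fun v : V ↦ exp (-‖v‖ ^ 2 / 2) := by
  refine Integrable.of_integral_ne_zero ?_
  rw [integral_exp_neg_sq_norm_div_two]
  positivity

theorem integral_exp_neg_sq_norm_div_two_pow_succ (n : ℕ) :
    ∫ v : V, exp (-‖v‖ ^ 2 / 2) ^ (n + 1) =
      (∫ v : V, exp (-‖v‖ ^ 2 / 2)) / ((n : ℝ) + 1) ^ ((Module.finrank ℝ V : ℝ) / 2) := by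
  have hpow (v : V) : exp (-‖v‖ ^ 2 / 2) ^ (n + 1) = exp (-(((n : ℝ) + 1) / 2) * ‖v‖ ^ 2) := by
    rw [← exp_nat_mul]
    push_cast
    ring_nf
  simp_rw [hpow]
  rw [GaussianFourier.integral_rexp_neg_mul_sq_norm (by positivity),
    integral_exp_neg_sq_norm_div_two, ← div_rpow (by positivity) (by positivity)]
  congr 1
  field_simp

end Gaussian

theorem stmt_2_general (N : ℕ) (β : ℝ) (hβ0 : 0 < β) (hβ1 : β < 1) :
    ∫ v : EuclideanSpace ℝ (Fin N),
        Real.exp (-‖v‖ ^ 2 / 2) / (1 - β * Real.exp (-‖v‖ ^ 2 / 2)) =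
      (∫ v : EuclideanSpace ℝ (Fin N), Real.exp (-‖v‖ ^ 2 / 2)) *
        ∑' n : ℕ, β ^ n / ((n : ℝ) + 1) ^ ((N : ℝ) / 2) := by
  have hg1 (v : EuclideanSpace ℝ (Fin N)) : exp (-‖v‖ ^ 2 / 2) ≤ 1 :=
    exp_le_one_iff.mpr (by have := sq_nonneg ‖v‖; linarith)
  rw [integral_div_one_sub_mul_eq_tsum integrable_exp_neg_sq_norm_div_two (fun _ ↦ (exp_pos _).le)
    hg1 hβ0.le hβ1, ← tsum_mul_left]
  simp_rw [integral_exp_neg_sq_norm_div_two_pow_succ, finrank_euclideanSpace_fin]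
  congr 1
  ext n
  ring

theorem stmt_2 (N : ℕ) (hN : 1 ≤ N) (β : ℝ) (hβ0 : 0 < β) (hβ1 : β < 1) :
    ∫ v : EuclideanSpace ℝ (Fin N),
        Real.exp (-‖v‖ ^ 2 / 2) / (1 - β * Real.exp (-‖v‖ ^ 2 / 2)) =
      (∫ v : EuclideanSpace ℝ (Fin N), Real.exp (-‖v‖ ^ 2 / 2)) *
        ∑' n : ℕ, β ^ n / ((n : ℝ) + 1) ^ ((N : ℝ) / 2) :=
  stmt_2_general N β hβ0 hβ1
end

section
/- The function S(β) = (1/2 + 1/N) · F₂(β)/F₀(β) - log β is strictly decreasing on (0,1), where F₀(β) = ∫_{ℝ^N} (β e^{-|v|²/2})/(1 - β e^{-|v|²/2}) dv and F₂(β) = ∫_{ℝ^N} |v|² (β e^{-|v|²/2})/(1 - β e^{-|v|²/2}) dv; in particular S is injective on (0,1). -/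
/-!
Since `-log β` is strictly decreasing, it suffices that the ratio `F₂ / F₀` is non-increasing.
Cross-multiplied, this is a Chebyshev-type correlation inequality: for `a ≤ b` the ratio of the
Bose weights `bose b / bose a` increases with `x = exp (-‖v‖² / 2)`, while `‖v‖²` decreases with
`x`, so `(‖v‖² - ‖v'‖²) (bose_b(v) bose_a(v') - bose_a(v) bose_b(v')) ≤ 0` pointwise, and
integrating this over pairs `(v, v')` gives `F₂(b) F₀(a) ≤ F₂(a) F₀(b)`.
-/

open MeasureTheory Real

/-- The integrands of `F₀` and `F₂` are `bose β (exp (-‖v‖ ^ 2 / 2))` and `‖v‖ ^ 2` times it. -/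
noncomputable def bose (β x : ℝ) : ℝ := β * x / (1 - β * x)

section Bose

variable {a b x y : ℝ}

lemma bose_pos (ha : 0 < a) (hx : 0 < x) (hax : a * x < 1) : 0 < bose a x :=
  div_pos (mul_pos ha hx) (sub_pos.2 hax)

lemma bose_nonneg (ha : 0 ≤ a) (hx : 0 ≤ x) (hax : a * x < 1) : 0 ≤ bose a x :=
  div_nonneg (mul_nonneg ha hx) (sub_pos.2 hax).le

lemma bose_le (ha : 0 ≤ a) (ha1 : a < 1) (hx : 0 ≤ x) (hx1 : x ≤ 1) :
    bose a x ≤ a / (1 - a) * x := by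
  have hax : a * x ≤ a := mul_le_of_le_one_right ha hx1
  rw [bose, div_mul_eq_mul_div]
  exact div_le_div_of_nonneg_left (by positivity) (by linarith) (by linarith)

/-- `bose b / bose a` is increasing when `a ≤ b`: cross-multiplied, the difference of the two
sides is `a b x y (b - a) (x - y)`. -/
lemma bose_mul_bose_le (ha : 0 ≤ a) (hab : a ≤ b) (hy : 0 ≤ y) (hyx : y ≤ x) (hbx : b * x < 1) :
    bose a x * bose b y ≤ bose b x * bose a y := by
  have hax : a * x < 1 := by nlinarith
  have hby : b * y < 1 := by nlinarith
  have hay : a * y < 1 := by nlinarith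
  unfold bose
  rw [div_mul_div_comm, div_mul_div_comm, div_le_div_iff₀ (by nlinarith) (by nlinarith)]
  nlinarith [mul_nonneg (mul_nonneg (mul_nonneg (mul_nonneg ha (ha.trans hab)) (hy.trans hyx)) hy)
    (mul_nonneg (sub_nonneg.2 hab) (sub_nonneg.2 hyx))]

end Bose

lemma mul_exp_neg_half_le (t : ℝ) : t * exp (-t / 2) ≤ 4 * exp (-t / 4) := by
  have ht : t ≤ 4 * exp (t / 4) := by linarith [add_one_le_exp (t / 4)]
  calc t * exp (-t / 2) ≤ 4 * exp (t / 4) * exp (-t / 2) :=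
        mul_le_mul_of_nonneg_right ht (exp_pos _).le
    _ = 4 * exp (-t / 4) := by rw [mul_assoc, ← exp_add]; ring_nf

/-- Integrating the hypothesis over `μ.prod μ` gives twice the difference of the two sides. -/
theorem integral_mul_mul_integral_le {α : Type*} [MeasurableSpace α] {μ : Measure α} [SFinite μ]
    {p u w : α → ℝ} (hu : Integrable u μ) (hw : Integrable w μ)
    (hpu : Integrable (fun v ↦ p v * u v) μ) (hpw : Integrable (fun v ↦ p v * w v) μ)
    (h : ∀ v v', (p v - p v') * (u v * w v' - w v * u v') ≤ 0) :
    (∫ v, p v * u v ∂μ) * ∫ v, w v ∂μ ≤ (∫ v, p v * w v ∂μ) * ∫ v, u v ∂μ := by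
  have hsplit : (fun q : α × α ↦ (p q.1 - p q.2) * (u q.1 * w q.2 - w q.1 * u q.2)) =
      fun q ↦ (p q.1 * u q.1) * w q.2 - (p q.1 * w q.1) * u q.2 - u q.1 * (p q.2 * w q.2)
        + w q.1 * (p q.2 * u q.2) := by
    ext; ring
  have hint : ∫ q, (p q.1 - p q.2) * (u q.1 * w q.2 - w q.1 * u q.2) ∂μ.prod μ =
      2 * ((∫ v, p v * u v ∂μ) * ∫ v, w v ∂μ - (∫ v, p v * w v ∂μ) * ∫ v, u v ∂μ) := by
    have i1 : Integrable (fun q : α × α ↦ p q.1 * u q.1 * w q.2) (μ.prod μ) := hpu.mul_prod hw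
    have i2 : Integrable (fun q : α × α ↦ p q.1 * w q.1 * u q.2) (μ.prod μ) := hpw.mul_prod hu
    have i3 : Integrable (fun q : α × α ↦ u q.1 * (p q.2 * w q.2)) (μ.prod μ) := hu.mul_prod hpw
    have i4 : Integrable (fun q : α × α ↦ w q.1 * (p q.2 * u q.2)) (μ.prod μ) := hw.mul_prod hpu
    rw [hsplit, integral_add ((i1.sub' i2).sub' i3) i4, integral_sub (i1.sub' i2) i3,
      integral_sub i1 i2]
    rw [integral_prod_mul (fun v ↦ p v * u v) w, integral_prod_mul (fun v ↦ p v * w v) u,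
      integral_prod_mul u (fun v ↦ p v * w v), integral_prod_mul w (fun v ↦ p v * u v)]
    ring
  have hnonpos := integral_nonpos (μ := μ.prod μ) fun q ↦ h q.1 q.2
  linarith

section Gaussian

variable {V : Type*} [NormedAddCommGroup V] [InnerProductSpace ℝ V] [FiniteDimensional ℝ V]
  [MeasurableSpace V] [BorelSpace V] {β : ℝ}

lemma integrable_exp_neg_sq_norm_div {c : ℝ} (hc : 0 < c) :
    Integrable (fun v : V ↦ exp (-‖v‖ ^ 2 / c)) := by
  have h := (GaussianFourier.integrable_cexp_neg_mul_sq_norm_add (V := V) (b := 1 / c)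
    (by simpa using hc) 0 0).re
  convert h using 2 with v
  rw [zero_mul, add_zero, ← Complex.ofReal_one, ← Complex.ofReal_div, ← Complex.ofReal_pow,
    ← Complex.ofReal_neg, ← Complex.ofReal_mul, RCLike.re_to_complex, Complex.exp_ofReal_re]
  ring_nf

lemma exp_neg_sq_div_two_le_one (r : ℝ) : exp (-r ^ 2 / 2) ≤ 1 :=
  exp_le_one_iff.2 (by nlinarith [sq_nonneg r])

lemma integrable_bose_gaussian (hβ0 : 0 ≤ β) (hβ1 : β < 1) :
    Integrable (fun v : V ↦ bose β (exp (-‖v‖ ^ 2 / 2))) := by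
  refine ((integrable_exp_neg_sq_norm_div two_pos).const_mul (β / (1 - β))).mono'
    (by unfold bose; exact (by fun_prop : Measurable _).aestronglyMeasurable) (.of_forall fun v ↦ ?_)
  have hx1 := exp_neg_sq_div_two_le_one ‖v‖
  rw [norm_of_nonneg (bose_nonneg hβ0 (exp_pos _).le (mul_lt_one_of_nonneg_of_lt_one_left hβ0 hβ1 hx1))]
  exact bose_le hβ0 hβ1 (exp_pos _).le hx1


lemma integrable_sq_norm_mul_bose_gaussian (hβ0 : 0 ≤ β) (hβ1 : β < 1) :
    Integrable (fun v : V ↦ ‖v‖ ^ 2 * bose β (exp (-‖v‖ ^ 2 / 2))) := by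
  refine ((integrable_exp_neg_sq_norm_div four_pos).const_mul (β / (1 - β) * 4)).mono'
    (by unfold bose; exact (by fun_prop : Measurable _).aestronglyMeasurable)
    (.of_forall fun v ↦ ?_)
  have hx1 := exp_neg_sq_div_two_le_one ‖v‖
  have hc : 0 ≤ β / (1 - β) := div_nonneg hβ0 (by linarith)
  rw [norm_of_nonneg (mul_nonneg (sq_nonneg _)
    (bose_nonneg hβ0 (exp_pos _).le (mul_lt_one_of_nonneg_of_lt_one_left hβ0 hβ1 hx1)))]
  calc ‖v‖ ^ 2 * bose β (exp (-‖v‖ ^ 2 / 2))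
      ≤ ‖v‖ ^ 2 * (β / (1 - β) * exp (-‖v‖ ^ 2 / 2)) :=
        mul_le_mul_of_nonneg_left (bose_le hβ0 hβ1 (exp_pos _).le hx1) (sq_nonneg _)
    _ = β / (1 - β) * (‖v‖ ^ 2 * exp (-‖v‖ ^ 2 / 2)) := by ring
    _ ≤ β / (1 - β) * (4 * exp (-‖v‖ ^ 2 / 4)) :=
        mul_le_mul_of_nonneg_left (mul_exp_neg_half_le _) hc
    _ = β / (1 - β) * 4 * exp (-‖v‖ ^ 2 / 4) := by ring

lemma integral_bose_gaussian_pos (hβ0 : 0 < β) (hβ1 : β < 1) :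
    0 < ∫ v : V, bose β (exp (-‖v‖ ^ 2 / 2)) := by
  have hpos (v : V) : 0 < bose β (exp (-‖v‖ ^ 2 / 2)) :=
    bose_pos hβ0 (exp_pos _)
      (mul_lt_one_of_nonneg_of_lt_one_left hβ0.le hβ1 (exp_neg_sq_div_two_le_one _))
  rw [integral_pos_iff_support_of_nonneg (fun v ↦ (hpos v).le)
    (integrable_bose_gaussian hβ0.le hβ1), Function.support_eq_univ fun v ↦ (hpos v).ne']
  exact isOpen_univ.measure_pos volume Set.univ_nonempty

theorem antitoneOn_integral_sq_norm_mul_bose_div_integral_bose :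
    AntitoneOn (fun β ↦ (∫ v : V, ‖v‖ ^ 2 * bose β (exp (-‖v‖ ^ 2 / 2))) /
      ∫ v : V, bose β (exp (-‖v‖ ^ 2 / 2))) (Set.Ioo 0 1) := by
  intro a ⟨ha0, ha1⟩ b ⟨hb0, hb1⟩ hab
  have hlt (v : V) : b * exp (-‖v‖ ^ 2 / 2) < 1 :=
    mul_lt_one_of_nonneg_of_lt_one_left hb0.le hb1 (exp_neg_sq_div_two_le_one _)
  rw [div_le_div_iff₀ (integral_bose_gaussian_pos hb0 hb1) (integral_bose_gaussian_pos ha0 ha1)]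
  refine integral_mul_mul_integral_le (integrable_bose_gaussian hb0.le hb1)
    (integrable_bose_gaussian ha0.le ha1) (integrable_sq_norm_mul_bose_gaussian hb0.le hb1)
    (integrable_sq_norm_mul_bose_gaussian ha0.le ha1) fun v v' ↦ ?_
  rcases le_total (‖v‖ ^ 2) (‖v'‖ ^ 2) with hvv' | hv'v
  · have := bose_mul_bose_le ha0.le hab (exp_pos _).le
      (exp_le_exp.2 (by linarith : -‖v'‖ ^ 2 / 2 ≤ -‖v‖ ^ 2 / 2)) (hlt v)
    exact mul_nonpos_of_nonpos_of_nonneg (by linarith) (by linarith)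
  · have := bose_mul_bose_le ha0.le hab (exp_pos _).le
      (exp_le_exp.2 (by linarith : -‖v‖ ^ 2 / 2 ≤ -‖v'‖ ^ 2 / 2)) (hlt v')
    exact mul_nonpos_of_nonneg_of_nonpos (by linarith) (by linarith)

end Gaussian

theorem stmt_4_general (N : ℕ)
    (F₀ F₂ S : ℝ → ℝ)
    (hF₀ : ∀ β, F₀ β = ∫ v : EuclideanSpace ℝ (Fin N),
        β * Real.exp (-‖v‖ ^ 2 / 2) / (1 - β * Real.exp (-‖v‖ ^ 2 / 2)))
    (hF₂ : ∀ β, F₂ β = ∫ v : EuclideanSpace ℝ (Fin N),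
        ‖v‖ ^ 2 * (β * Real.exp (-‖v‖ ^ 2 / 2)) / (1 - β * Real.exp (-‖v‖ ^ 2 / 2)))
    (hS : ∀ β, S β = (1 / 2 + 1 / (N : ℝ)) * (F₂ β / F₀ β) - Real.log β) :
    StrictAntiOn S (Set.Ioo (0 : ℝ) 1) ∧ Set.InjOn S (Set.Ioo (0 : ℝ) 1) := by
  have hratio (β : ℝ) : F₂ β / F₀ β =
      (∫ v : EuclideanSpace ℝ (Fin N), ‖v‖ ^ 2 * bose β (exp (-‖v‖ ^ 2 / 2))) /
        ∫ v : EuclideanSpace ℝ (Fin N), bose β (exp (-‖v‖ ^ 2 / 2)) := by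
    simp only [hF₀, hF₂, bose, mul_div_assoc]
  have hanti : StrictAntiOn S (Set.Ioo 0 1) := by
    intro a ha b hb hab
    have hratio_le := mul_le_mul_of_nonneg_left
      (antitoneOn_integral_sq_norm_mul_bose_div_integral_bose
        (V := EuclideanSpace ℝ (Fin N)) ha hb hab.le)
      (by positivity : (0 : ℝ) ≤ 1 / 2 + 1 / (N : ℝ))
    rw [hS, hS, hratio, hratio]
    linarith [log_lt_log ha.1 hab]
  exact ⟨hanti, hanti.injOn⟩

theorem stmt_4 (N : ℕ) (hN : 1 ≤ N)
    (F₀ F₂ S : ℝ → ℝ)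
    (hF₀ : ∀ β, F₀ β = ∫ v : EuclideanSpace ℝ (Fin N),
        β * Real.exp (-‖v‖ ^ 2 / 2) / (1 - β * Real.exp (-‖v‖ ^ 2 / 2)))
    (hF₂ : ∀ β, F₂ β = ∫ v : EuclideanSpace ℝ (Fin N),
        ‖v‖ ^ 2 * (β * Real.exp (-‖v‖ ^ 2 / 2)) / (1 - β * Real.exp (-‖v‖ ^ 2 / 2)))
    (hS : ∀ β, S β = (1 / 2 + 1 / (N : ℝ)) * (F₂ β / F₀ β) - Real.log β) :
    StrictAntiOn S (Set.Ioo (0 : ℝ) 1) ∧ Set.InjOn S (Set.Ioo (0 : ℝ) 1) :=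
  stmt_4_general N F₀ F₂ S hF₀ hF₂ hS
end

section
/- Let ρ_n, ρ_s, α, c > 0 and u_n, u_s ∈ ℝ, and let P(λ) = ((λ - u_n)² - c ρ_n^{2/3} - 2α ρ_n)((λ - u_s)² - (α/2) ρ_s) - α² ρ_n ρ_s. If (u_n - u_s)² < c ρ_n^{2/3}, then P has four distinct real roots λ₁ < λ₂ < λ₃ < λ₄, and moreover λ₁ < u_s - √(αρ_s/2) < λ₂ < u_s < λ₃ < u_s + √(αρ_s/2) < λ₄. -/
set_option maxHeartbeats 1000000


theorem stmt_8 (ρ_n ρ_s α c u_n u_s : ℝ) (hρn : 0 < ρ_n) (hρs : 0 < ρ_s)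
    (hα : 0 < α) (hc : 0 < c)
    (P : ℝ → ℝ)
    (hP : ∀ l, P l = ((l - u_n) ^ 2 - c * ρ_n ^ ((2 : ℝ) / 3) - 2 * α * ρ_n) *
        ((l - u_s) ^ 2 - α / 2 * ρ_s) - α ^ 2 * ρ_n * ρ_s)
    (hcond : (u_n - u_s) ^ 2 < c * ρ_n ^ ((2 : ℝ) / 3)) :
    ∃ l1 l2 l3 l4 : ℝ,
      P l1 = 0 ∧ P l2 = 0 ∧ P l3 = 0 ∧ P l4 = 0 ∧
      l1 < u_s - Real.sqrt (α * ρ_s / 2) ∧ u_s - Real.sqrt (α * ρ_s / 2) < l2 ∧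
      l2 < u_s ∧ u_s < l3 ∧
      l3 < u_s + Real.sqrt (α * ρ_s / 2) ∧ u_s + Real.sqrt (α * ρ_s / 2) < l4 := by
  set s := Real.sqrt (α * ρ_s / 2) with hs_def
  have hsρ : 0 < α * ρ_s / 2 := by positivity
  have hs2 : s ^ 2 = α * ρ_s / 2 := Real.sq_sqrt hsρ.le
  have hs : 0 < s := Real.sqrt_pos.mpr hsρ
  have hK : 0 < α ^ 2 * ρ_n * ρ_s := by positivity
  have hρn23 : 0 < ρ_n ^ ((2 : ℝ) / 3) := Real.rpow_pos_of_pos hρn _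
  have hcont : Continuous P := by
    have hPe : P = fun l => ((l - u_n) ^ 2 - c * ρ_n ^ ((2 : ℝ) / 3) - 2 * α * ρ_n) *
        ((l - u_s) ^ 2 - α / 2 * ρ_s) - α ^ 2 * ρ_n * ρ_s := funext hP
    rw [hPe]; continuity
  -- sign values
  have hPm : P (u_s - s) < 0 := by
    have h1 : P (u_s - s) = -(α ^ 2 * ρ_n * ρ_s) := by
      rw [hP]
      linear_combination ((u_s - s - u_n) ^ 2 - c * ρ_n ^ ((2 : ℝ) / 3) - 2 * α * ρ_n) * hs2
    rw [h1]; linarith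
  have hPp : P (u_s + s) < 0 := by
    have h1 : P (u_s + s) = -(α ^ 2 * ρ_n * ρ_s) := by
      rw [hP]
      linear_combination ((u_s + s - u_n) ^ 2 - c * ρ_n ^ ((2 : ℝ) / 3) - 2 * α * ρ_n) * hs2
    rw [h1]; linarith
  have hP0 : 0 < P u_s := by
    rw [hP]
    nlinarith [mul_pos (sub_pos.mpr hcond) hsρ, mul_pos hρn hρs, sq_nonneg (u_n - u_s)]
  -- far points
  set a := Real.sqrt (c * ρ_n ^ ((2 : ℝ) / 3) + 2 * α * ρ_n + 1) with ha_def
  set b := Real.sqrt (α / 2 * ρ_s + α ^ 2 * ρ_n * ρ_s + 1) with hb_def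
  have ha2 : a ^ 2 = c * ρ_n ^ ((2 : ℝ) / 3) + 2 * α * ρ_n + 1 := by
    apply Real.sq_sqrt; positivity
  have hb2 : b ^ 2 = α / 2 * ρ_s + α ^ 2 * ρ_n * ρ_s + 1 := by
    apply Real.sq_sqrt; positivity
  have ha0 : 0 ≤ a := Real.sqrt_nonneg _
  have hb0 : 0 ≤ b := Real.sqrt_nonneg _
  set R := a + b with hR_def
  have hRa : a ≤ R := by linarith
  have hRb : b ≤ R := by linarith
  have hR0 : 0 ≤ R := by linarith
  have hRa2 : a ^ 2 ≤ R ^ 2 := pow_le_pow_left₀ ha0 hRa 2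
  have hRb2 : b ^ 2 ≤ R ^ 2 := pow_le_pow_left₀ hb0 hRb 2
  have hsb : s < b := by
    rw [hs_def, hb_def]
    apply Real.sqrt_lt_sqrt hsρ.le
    nlinarith
  have hsR : s < R := lt_of_lt_of_le hsb hRb
  set M := max u_n u_s + R with hM_def
  set m := min u_n u_s - R with hm_def
  clear_value s a b R M m
  -- P M > 0
  have hMA : 1 ≤ (M - u_n) ^ 2 - c * ρ_n ^ ((2 : ℝ) / 3) - 2 * α * ρ_n := by
    have h1 : R ≤ M - u_n := by
      have := le_max_left u_n u_s; simp only [hM_def]; linarith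
    have h2 : R ^ 2 ≤ (M - u_n) ^ 2 := pow_le_pow_left₀ hR0 h1 2
    linarith
  have hMB : α ^ 2 * ρ_n * ρ_s + 1 ≤ (M - u_s) ^ 2 - α / 2 * ρ_s := by
    have h1 : R ≤ M - u_s := by
      have := le_max_right u_n u_s; simp only [hM_def]; linarith
    have h2 : R ^ 2 ≤ (M - u_s) ^ 2 := pow_le_pow_left₀ hR0 h1 2
    linarith
  have hPM : 0 < P M := by
    rw [hP]
    have h := mul_le_mul hMA hMB (by linarith) (by linarith)
    linarith
  -- P m > 0
  have hmA : 1 ≤ (m - u_n) ^ 2 - c * ρ_n ^ ((2 : ℝ) / 3) - 2 * α * ρ_n := by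
    have h1 : R ≤ u_n - m := by
      have := min_le_left u_n u_s; simp only [hm_def]; linarith
    have h2 : R ^ 2 ≤ (u_n - m) ^ 2 := pow_le_pow_left₀ hR0 h1 2
    have h3 : (u_n - m) ^ 2 = (m - u_n) ^ 2 := by ring
    rw [h3] at h2
    linarith
  have hmB : α ^ 2 * ρ_n * ρ_s + 1 ≤ (m - u_s) ^ 2 - α / 2 * ρ_s := by
    have h1 : R ≤ u_s - m := by
      have := min_le_right u_n u_s; simp only [hm_def]; linarith
    have h2 : R ^ 2 ≤ (u_s - m) ^ 2 := pow_le_pow_left₀ hR0 h1 2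
    have h3 : (u_s - m) ^ 2 = (m - u_s) ^ 2 := by ring
    rw [h3] at h2
    linarith
  have hPmm : 0 < P m := by
    rw [hP]
    have h := mul_le_mul hmA hmB (by linarith) (by linarith)
    linarith
  -- orderings
  have hmlt : m < u_s - s := by
    have := min_le_right u_n u_s
    simp only [hm_def]; linarith
  have hMgt : u_s + s < M := by
    have := le_max_right u_n u_s
    simp only [hM_def]; linarith
  -- IVT applications
  have hcontOn : ∀ x y : ℝ, ContinuousOn P (Set.Icc x y) := fun x y => hcont.continuousOn
  obtain ⟨l1, hl1mem, hl1⟩ := intermediate_value_Ioo' hmlt.le (hcontOn _ _)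
    (Set.mem_Ioo.mpr ⟨hPm, hPmm⟩)
  obtain ⟨l2, hl2mem, hl2⟩ := intermediate_value_Ioo (by linarith : u_s - s ≤ u_s)
    (hcontOn _ _) (Set.mem_Ioo.mpr ⟨hPm, hP0⟩)
  obtain ⟨l3, hl3mem, hl3⟩ := intermediate_value_Ioo' (by linarith : u_s ≤ u_s + s)
    (hcontOn _ _) (Set.mem_Ioo.mpr ⟨hPp, hP0⟩)
  obtain ⟨l4, hl4mem, hl4⟩ := intermediate_value_Ioo hMgt.le (hcontOn _ _)
    (Set.mem_Ioo.mpr ⟨hPp, hPM⟩)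
  exact ⟨l1, l2, l3, l4, hl1, hl2, hl3, hl4, hl1mem.2, hl2mem.1, hl2mem.2,
    hl3mem.1, hl3mem.2, hl4mem.1⟩
end

section
/- Let ρ_n, ρ_s, α, c > 0 and u_n, u_s ∈ ℝ, and let P(λ) = ((λ - u_n)² - c ρ_n^{2/3} - 2α ρ_n)((λ - u_s)² - (α/2) ρ_s) - α² ρ_n ρ_s. If (u_n - u_s)² < c (α/2) ρ_s ρ_n^{2/3} / (c ρ_n^{2/3} + 2α ρ_n), then P has four distinct real roots λ₁ < λ₂ < λ₃ < λ₄ satisfying λ₁ < u_n - √(cρ_n^{2/3} + 2αρ_n) < λ₂ < u_n < λ₃ < u_n + √(cρ_n^{2/3} + 2αρ_n) < λ₄. -/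
theorem stmt_9 (ρ_n ρ_s α c u_n u_s : ℝ) (hρn : 0 < ρ_n) (hρs : 0 < ρ_s)
    (hα : 0 < α) (hc : 0 < c)
    (P : ℝ → ℝ)
    (hP : ∀ l, P l = ((l - u_n) ^ 2 - c * ρ_n ^ ((2 : ℝ) / 3) - 2 * α * ρ_n) *
        ((l - u_s) ^ 2 - α / 2 * ρ_s) - α ^ 2 * ρ_n * ρ_s)
    (hcond : (u_n - u_s) ^ 2 <
        c * (α / 2) * ρ_s * ρ_n ^ ((2 : ℝ) / 3) / (c * ρ_n ^ ((2 : ℝ) / 3) + 2 * α * ρ_n)) :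
    ∃ l1 l2 l3 l4 : ℝ,
      P l1 = 0 ∧ P l2 = 0 ∧ P l3 = 0 ∧ P l4 = 0 ∧
      l1 < u_n - Real.sqrt (c * ρ_n ^ ((2 : ℝ) / 3) + 2 * α * ρ_n) ∧
      u_n - Real.sqrt (c * ρ_n ^ ((2 : ℝ) / 3) + 2 * α * ρ_n) < l2 ∧
      l2 < u_n ∧ u_n < l3 ∧
      l3 < u_n + Real.sqrt (c * ρ_n ^ ((2 : ℝ) / 3) + 2 * α * ρ_n) ∧
      u_n + Real.sqrt (c * ρ_n ^ ((2 : ℝ) / 3) + 2 * α * ρ_n) < l4 := by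
  set D : ℝ := ρ_n ^ ((2 : ℝ) / 3) with hDdef
  have hD : 0 < D := Real.rpow_pos_of_pos hρn _
  set A : ℝ := c * D + 2 * α * ρ_n with hAdef
  have hA : 0 < A := by positivity
  set s : ℝ := Real.sqrt A with hsdef
  have hs : 0 < s := Real.sqrt_pos.mpr hA
  have hs2 : s ^ 2 = A := Real.sq_sqrt hA.le
  -- K bound
  set K : ℝ := α * Real.sqrt (ρ_n * ρ_s) + 1 with hKdef
  have hsq : (Real.sqrt (ρ_n * ρ_s)) ^ 2 = ρ_n * ρ_s := Real.sq_sqrt (by positivity)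
  have hsqnn : 0 ≤ Real.sqrt (ρ_n * ρ_s) := Real.sqrt_nonneg _
  have hK : 0 < K := by positivity
  clear_value D A s K
  have hK2 : α ^ 2 * ρ_n * ρ_s < K ^ 2 := by nlinarith
  -- continuity
  have hPc : Continuous P := by
    have : P = fun l => ((l - u_n) ^ 2 - c * D - 2 * α * ρ_n) *
        ((l - u_s) ^ 2 - α / 2 * ρ_s) - α ^ 2 * ρ_n * ρ_s := funext hP
    rw [this]; fun_prop
  -- endpoints
  set a : ℝ := min (u_n - Real.sqrt (A + K)) (u_s - Real.sqrt (α / 2 * ρ_s + K)) with hadef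
  set b : ℝ := max (u_n + Real.sqrt (A + K)) (u_s + Real.sqrt (α / 2 * ρ_s + K)) with hbdef
  have hab : a ≤ u_n - Real.sqrt (A + K) ∧ a ≤ u_s - Real.sqrt (α / 2 * ρ_s + K) ∧
      u_n + Real.sqrt (A + K) ≤ b ∧ u_s + Real.sqrt (α / 2 * ρ_s + K) ≤ b :=
    ⟨min_le_left _ _, min_le_right _ _, le_max_left _ _, le_max_right _ _⟩
  clear_value a b
  obtain ⟨hab1, hab2, hab3, hab4⟩ := hab
  have hAK : (Real.sqrt (A + K)) ^ 2 = A + K := Real.sq_sqrt (by positivity)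
  have hBK : (Real.sqrt (α / 2 * ρ_s + K)) ^ 2 = α / 2 * ρ_s + K := Real.sq_sqrt (by positivity)
  have hAKnn : 0 ≤ Real.sqrt (A + K) := Real.sqrt_nonneg _
  have hBKnn : 0 ≤ Real.sqrt (α / 2 * ρ_s + K) := Real.sqrt_nonneg _
  have hsltAK : s < Real.sqrt (A + K) := by
    rw [hsdef]; exact Real.sqrt_lt_sqrt hA.le (by linarith)
  -- P a > 0
  have key : ∀ x : ℝ, K ≤ (x - u_n) ^ 2 - A → K ≤ (x - u_s) ^ 2 - α / 2 * ρ_s → 0 < P x := by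
    intro x h1 h2
    rw [hP]
    have : K * K ≤ ((x - u_n) ^ 2 - c * D - 2 * α * ρ_n) * ((x - u_s) ^ 2 - α / 2 * ρ_s) := by
      apply mul_le_mul
      · rw [hAdef] at h1; linarith
      · exact h2
      · exact hK.le
      · rw [hAdef] at h1; linarith
    rw [pow_two] at hK2
    linarith
  have hPa : 0 < P a := by
    apply key
    · have h : Real.sqrt (A + K) ≤ u_n - a := by linarith
      have h2 := pow_le_pow_left₀ hAKnn h 2
      rw [hAK] at h2
      have h3 : (a - u_n) ^ 2 = (u_n - a) ^ 2 := by ring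
      linarith
    · have h : Real.sqrt (α / 2 * ρ_s + K) ≤ u_s - a := by linarith
      have h2 := pow_le_pow_left₀ hBKnn h 2
      rw [hBK] at h2
      have h3 : (a - u_s) ^ 2 = (u_s - a) ^ 2 := by ring
      linarith
  have hPb : 0 < P b := by
    apply key
    · have h : Real.sqrt (A + K) ≤ b - u_n := by linarith
      have h2 := pow_le_pow_left₀ hAKnn h 2
      rw [hAK] at h2
      linarith
    · have h : Real.sqrt (α / 2 * ρ_s + K) ≤ b - u_s := by linarith
      have h2 := pow_le_pow_left₀ hBKnn h 2
      rw [hBK] at h2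
      linarith
  -- P at u_n ± s is negative
  have hPneg : ∀ x : ℝ, (x - u_n) ^ 2 = A → P x < 0 := by
    intro x hx
    rw [hP]
    have : (x - u_n) ^ 2 - c * D - 2 * α * ρ_n = 0 := by rw [hx, hAdef]; ring
    rw [this, zero_mul]
    have : 0 < α ^ 2 * ρ_n * ρ_s := by positivity
    linarith
  have hPm : P (u_n - s) < 0 := hPneg _ (by rw [show u_n - s - u_n = -s by ring]; rw [neg_pow]; simpa using hs2)
  have hPp : P (u_n + s) < 0 := hPneg _ (by rw [show u_n + s - u_n = s by ring]; exact hs2)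
  -- P u_n > 0
  have hcond' : (u_n - u_s) ^ 2 * A < c * (α / 2) * ρ_s * D :=
    (lt_div_iff₀ hA).mp hcond
  have hPun : 0 < P u_n := by
    rw [hP]
    have h0 : (u_n - u_n) ^ 2 - c * D - 2 * α * ρ_n = -A := by rw [hAdef]; ring
    rw [h0]
    have hAs : A * (α / 2 * ρ_s) = c * (α / 2) * ρ_s * D + α ^ 2 * ρ_n * ρ_s := by
      rw [hAdef]; ring
    nlinarith [hcond', hAs]
  -- order of points
  have h1 : a < u_n - s := by linarith
  have h2 : u_n - s < u_n := by linarith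
  have h3 : u_n < u_n + s := by linarith
  have h4 : u_n + s < b := by linarith
  -- IVT applications
  obtain ⟨l1, hl1mem, hl1⟩ := intermediate_value_Ioo' h1.le hPc.continuousOn
    (Set.mem_Ioo.mpr ⟨hPm, hPa⟩)
  obtain ⟨l2, hl2mem, hl2⟩ := intermediate_value_Ioo h2.le hPc.continuousOn
    (Set.mem_Ioo.mpr ⟨hPm, hPun⟩)
  obtain ⟨l3, hl3mem, hl3⟩ := intermediate_value_Ioo' h3.le hPc.continuousOn
    (Set.mem_Ioo.mpr ⟨hPp, hPun⟩)
  obtain ⟨l4, hl4mem, hl4⟩ := intermediate_value_Ioo h4.le hPc.continuousOn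
    (Set.mem_Ioo.mpr ⟨hPp, hPb⟩)
  exact ⟨l1, l2, l3, l4, hl1, hl2, hl3, hl4, hl1mem.2, hl2mem.1, hl2mem.2, hl3mem.1,
    hl3mem.2, hl4mem.1⟩
end

section
/- Let ρ_n, ρ_s, α, c > 0 and u_n, u_s ∈ ℝ satisfy u_s² < (α/2)ρ_s and P(0) > 0, where P(λ) = ((λ - u_n)² - cρ_n^{2/3} - 2αρ_n)((λ - u_s)² - (α/2)ρ_s) - α²ρ_nρ_s. Then the symmetric 4×4 matrix H with rows (cρ_n^{-1/3} + 2α, α, u_n, 0), (α, α/2, 0, u_s), (u_n, 0, ρ_n, 0), (0, u_s, 0, ρ_s) is positive definite. -/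
/-!
Complete the squares in the last two coordinates: for the quadratic form `Q` of `H`,
`ρ_n ρ_s Q(x) = ρ_s (ρ_n x₂ + u_n x₀)² + ρ_n (ρ_s x₃ + u_s x₁)² + B(x₀, x₁)`, where `B` is
`ρ_n ρ_s` times the quadratic form of the Schur complement of `diag(ρ_n, ρ_s)` in `H`.
Since `ρ_n^{2/3} = ρ_n · ρ_n^{-1/3}`, the discriminant condition making `B` positive definite
is exactly `P(0) > 0`, and its diagonal condition is `u_s² < (α/2) ρ_s`.
-/

open Matrix

theorem binaryForm_pos {K : Type*} [CommRing K] [LinearOrder K] [IsStrictOrderedRing K]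
    {p q t x y : K} (ht : 0 < t) (hdisc : 0 < p * t - q ^ 2) (hxy : x ≠ 0 ∨ y ≠ 0) :
    0 < p * x ^ 2 + 2 * q * x * y + t * y ^ 2 := by
  refine (mul_pos_iff_of_pos_left ht).mp ?_
  have hsq : t * (p * x ^ 2 + 2 * q * x * y + t * y ^ 2)
      = (t * y + q * x) ^ 2 + (p * t - q ^ 2) * x ^ 2 := by ring
  rw [hsq]
  rcases eq_or_ne x 0 with rfl | hx
  · have : t * y ≠ 0 := mul_ne_zero ht.ne' (hxy.resolve_left (not_not.mpr rfl))
    simpa using (by positivity : 0 < (t * y) ^ 2)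
  · have : 0 < x ^ 2 := by positivity
    positivity

/-- The hypotheses say, with denominators cleared, that the Schur complement
`!![a - u ^ 2 / r, b; b, d - v ^ 2 / s]` of `diagonal ![r, s]` is positive definite. -/
theorem posDef_fin_four_of_schur {a b d u v r s : ℝ} (hr : 0 < r) (hs : 0 < s)
    (hd : 0 < d * s - v ^ 2) (hdet : 0 < (a * r - u ^ 2) * (d * s - v ^ 2) - b ^ 2 * r * s) :
    (!![a, b, u, 0; b, d, 0, v; u, 0, r, 0; 0, v, 0, s] : Matrix (Fin 4) (Fin 4) ℝ).PosDef := by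
  rw [posDef_iff_dotProduct_mulVec]
  refine ⟨?_, fun x hx => ?_⟩
  · ext i j
    fin_cases i <;> fin_cases j <;> simp
  refine pos_of_mul_pos_right ?_ (mul_pos hr hs).le
  have hsum : 0 < s * (r * x 2 + u * x 0) ^ 2 + r * (s * x 3 + v * x 1) ^ 2 +
      (s * (a * r - u ^ 2) * x 0 ^ 2 + 2 * (b * r * s) * x 0 * x 1 +
        r * (d * s - v ^ 2) * x 1 ^ 2) := by
    by_cases h01 : x 0 = 0 ∧ x 1 = 0
    · obtain ⟨h0, h1⟩ := h01
      have h23 : x 2 ≠ 0 ∨ x 3 ≠ 0 := by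
        by_contra! h23
        exact hx (funext fun i => by fin_cases i <;> simp [h0, h1, h23])
      simp only [h0, h1, mul_zero, add_zero, zero_pow two_ne_zero]
      rcases h23 with h | h <;> positivity
    · have hB := binaryForm_pos (p := s * (a * r - u ^ 2)) (q := b * r * s) (mul_pos hr hd)
        (by nlinarith [mul_pos (mul_pos hr hs) hdet]) (not_and_or.mp h01)
      exact add_pos_of_nonneg_of_pos (by positivity) hB
  refine hsum.trans_eq ?_
  simp [mulVec, dotProduct, Fin.sum_univ_four]
  ring

theorem stmt_13_general (ρ_n ρ_s α c u_n u_s : ℝ) (hρn : 0 < ρ_n) (hρs : 0 < ρ_s)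
    (P : ℝ → ℝ)
    (hP : ∀ l, P l = ((l - u_n) ^ 2 - c * ρ_n ^ ((2 : ℝ) / 3) - 2 * α * ρ_n) *
        ((l - u_s) ^ 2 - α / 2 * ρ_s) - α ^ 2 * ρ_n * ρ_s)
    (hus : u_s ^ 2 < α / 2 * ρ_s) (hP0 : 0 < P 0)
    (H : Matrix (Fin 4) (Fin 4) ℝ)
    (hH : H = !![c * ρ_n ^ (-(1 : ℝ) / 3) + 2 * α, α, u_n, 0;
                 α, α / 2, 0, u_s;
                 u_n, 0, ρ_n, 0;
                 0, u_s, 0, ρ_s]) :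
    H.PosDef := by
  have hpow : ρ_n ^ ((2 : ℝ) / 3) = ρ_n ^ (-(1 : ℝ) / 3) * ρ_n := by
    rw [← Real.rpow_add_one hρn.ne']
    norm_num
  have hP0' : P 0 = ((c * ρ_n ^ (-(1 : ℝ) / 3) + 2 * α) * ρ_n - u_n ^ 2) *
      (α / 2 * ρ_s - u_s ^ 2) - α ^ 2 * ρ_n * ρ_s := by
    rw [hP, hpow]; ring
  subst hH
  exact posDef_fin_four_of_schur hρn hρs (by linarith) (by linarith)

theorem stmt_13 (ρ_n ρ_s α c u_n u_s : ℝ) (hρn : 0 < ρ_n) (hρs : 0 < ρ_s)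
    (hα : 0 < α) (hc : 0 < c)
    (P : ℝ → ℝ)
    (hP : ∀ l, P l = ((l - u_n) ^ 2 - c * ρ_n ^ ((2 : ℝ) / 3) - 2 * α * ρ_n) *
        ((l - u_s) ^ 2 - α / 2 * ρ_s) - α ^ 2 * ρ_n * ρ_s)
    (hus : u_s ^ 2 < α / 2 * ρ_s) (hP0 : 0 < P 0)
    (H : Matrix (Fin 4) (Fin 4) ℝ)
    (hH : H = !![c * ρ_n ^ (-(1 : ℝ) / 3) + 2 * α, α, u_n, 0;
                 α, α / 2, 0, u_s;
                 u_n, 0, ρ_n, 0;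
                 0, u_s, 0, ρ_s]) :
    H.PosDef :=
  stmt_13_general ρ_n ρ_s α c u_n u_s hρn hρs P hP hus hP0 H hH
end

section
/- Let λ ∈ ℝ be a root of P(λ) = ((λ - u_n)² - cρ_n^{2/3} - 2αρ_n)((λ - u_s)² - (α/2)ρ_s) - α²ρ_nρ_s. Then the vector X = ((λ-u_s)² - (α/2)ρ_s, αρ_s, (1/ρ_n)(λ-u_n)((λ-u_s)² - (α/2)ρ_s), α(λ-u_s)) satisfies A X = λ X, where A is the matrix with rows (u_n, 0, ρ_n, 0), (0, u_s, 0, ρ_s), (cρ_n^{-1/3} + 2α, α, u_n, 0), (α, α/2, 0, u_s). -/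
/-
Writing `κ = c ρ_n^{-1/3} + 2α` for the (3,1) entry of `A`, one has `κ ρ_n = c ρ_n^{2/3} + 2αρ_n`,
so `P(λ) = 0` is the dispersion relation `((λ - u_n)² - κ ρ_n)((λ - u_s)² - (α/2) ρ_s) = α² ρ_n ρ_s`.
Rows 1, 2 and 4 of `A X = λ X` are polynomial identities; row 3, multiplied by `ρ_n`, is exactly the
dispersion relation. This is pure field algebra in `κ`, independent of the rational powers.
-/

theorem Matrix.mulVec_twoFluid_eigenvector {K : Type*} [Field K] (ρ_n ρ_s α κ u_n u_s l : K)
    (hρn : ρ_n ≠ 0)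
    (hdisp : ((l - u_n) ^ 2 - κ * ρ_n) * ((l - u_s) ^ 2 - α / 2 * ρ_s) - α ^ 2 * ρ_n * ρ_s = 0) :
    Matrix.mulVec
      !![u_n, 0, ρ_n, 0;
         0, u_s, 0, ρ_s;
         κ, α, u_n, 0;
         α, α / 2, 0, u_s]
      ![(l - u_s) ^ 2 - α / 2 * ρ_s,
        α * ρ_s,
        (1 / ρ_n) * (l - u_n) * ((l - u_s) ^ 2 - α / 2 * ρ_s),
        α * (l - u_s)] =
    l • ![(l - u_s) ^ 2 - α / 2 * ρ_s,
          α * ρ_s,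
          (1 / ρ_n) * (l - u_n) * ((l - u_s) ^ 2 - α / 2 * ρ_s),
          α * (l - u_s)] := by
  ext i
  fin_cases i <;>
    simp only [Matrix.mulVec, dotProduct, Fin.sum_univ_four, Fin.zero_eta, Fin.mk_one,
      Fin.reduceFinMk, Fin.isValue, Matrix.of_apply, Matrix.cons_val', Matrix.cons_val_fin_one,
      Matrix.cons_val_zero, Matrix.cons_val_one, Matrix.cons_val, one_div, zero_mul, zero_add,
      add_zero, Pi.smul_apply, smul_eq_mul]
  · field_simp
    ring
  · ring
  · field_simp
    linear_combination -hdisp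
  · ring

theorem stmt_14_general (ρ_n ρ_s α c u_n u_s : ℝ) (hρn : 0 < ρ_n) (l : ℝ)
    (hroot : ((l - u_n) ^ 2 - c * ρ_n ^ ((2 : ℝ) / 3) - 2 * α * ρ_n) *
        ((l - u_s) ^ 2 - α / 2 * ρ_s) - α ^ 2 * ρ_n * ρ_s = 0)
    (A : Matrix (Fin 4) (Fin 4) ℝ)
    (hA : A = !![u_n, 0, ρ_n, 0;
                 0, u_s, 0, ρ_s;
                 c * ρ_n ^ (-(1 : ℝ) / 3) + 2 * α, α, u_n, 0;
                 α, α / 2, 0, u_s])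
    (X : Fin 4 → ℝ)
    (hX : X = ![(l - u_s) ^ 2 - α / 2 * ρ_s,
                α * ρ_s,
                (1 / ρ_n) * (l - u_n) * ((l - u_s) ^ 2 - α / 2 * ρ_s),
                α * (l - u_s)]) :
    A.mulVec X = l • X := by
  have hpow : ρ_n ^ ((2 : ℝ) / 3) = ρ_n ^ (-(1 : ℝ) / 3) * ρ_n := by
    rw [← Real.rpow_add_one hρn.ne']
    norm_num
  subst hA hX
  refine Matrix.mulVec_twoFluid_eigenvector _ _ _ _ _ _ _ hρn.ne' ?_
  rw [hpow] at hroot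
  linear_combination hroot

theorem stmt_14 (ρ_n ρ_s α c u_n u_s : ℝ) (hρn : 0 < ρ_n) (hρs : 0 < ρ_s)
    (hα : 0 < α) (hc : 0 < c) (l : ℝ)
    (hroot : ((l - u_n) ^ 2 - c * ρ_n ^ ((2 : ℝ) / 3) - 2 * α * ρ_n) *
        ((l - u_s) ^ 2 - α / 2 * ρ_s) - α ^ 2 * ρ_n * ρ_s = 0)
    (A : Matrix (Fin 4) (Fin 4) ℝ)
    (hA : A = !![u_n, 0, ρ_n, 0;
                 0, u_s, 0, ρ_s;
                 c * ρ_n ^ (-(1 : ℝ) / 3) + 2 * α, α, u_n, 0;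
                 α, α / 2, 0, u_s])
    (X : Fin 4 → ℝ)
    (hX : X = ![(l - u_s) ^ 2 - α / 2 * ρ_s,
                α * ρ_s,
                (1 / ρ_n) * (l - u_n) * ((l - u_s) ^ 2 - α / 2 * ρ_s),
                α * (l - u_s)]) :
    A.mulVec X = l • X :=
  stmt_14_general ρ_n ρ_s α c u_n u_s hρn l hroot A hA X hX
end
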